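/- The dispersion entropy of a time series computed via the graph-based algorithm on the directed path P⃗ on N vertices coincides with the classical dispersion entropy: DE(m, L, c) = DE_{P⃗}(m, L, c) for all embedding dimensions m ≥ 2, delays L ≥ 1 with N > (m−1)L, and class numbers c ≥ 1. -/
import Mathlib


open Finset
open scoped Classical

/-- Adjacency matrix of the directed path on `N` vertices: an arc from `i` to `i+1`. -/
noncomputable def pathAdj (N : ℕ) : Matrix (Fin N) (Fin N) ℝ :=
  fun i j => if (j : ℕ) = (i : ℕ) + 1 then 1 else 0

/-- Normalized Shannon entropy of the empirical distribution of dispersion patterns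
(rows of the classified embedding matrix), as used in dispersion entropy. -/
noncomputable def dispEntropy {ι : Type*} [Fintype ι] (m c : ℕ)
    (pat : ι → (Fin m → Fin c)) : ℝ :=
  -(1 / Real.log ((c : ℝ) ^ m)) * ∑ π : Fin m → Fin c,
    (((Finset.univ.filter fun i => pat i = π).card : ℝ) / (Fintype.card ι : ℝ)) *
      Real.log (((Finset.univ.filter fun i => pat i = π).card : ℝ) / (Fintype.card ι : ℝ))

lemma pathAdj_pow (N p : ℕ) (i j : Fin N) :
    ((pathAdj N) ^ p) i j = if (j : ℕ) = (i : ℕ) + p then 1 else 0 := by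
  induction p generalizing j with
  | zero => simp [Matrix.one_apply, Fin.ext_iff, eq_comm]
  | succ p ih =>
    rw [pow_succ, Matrix.mul_apply]
    by_cases h : (i : ℕ) + p < N
    · rw [Finset.sum_eq_single (⟨(i : ℕ) + p, h⟩ : Fin N)]
      · simp [ih, pathAdj, Nat.add_assoc]
      · intro k _ hk
        rw [ih]
        simp only [pathAdj]
        rw [if_neg, zero_mul]
        intro hkeq
        exact hk (Fin.ext hkeq)
      · simp
    · rw [Finset.sum_eq_zero, if_neg]
      · intro hj; omega
      · intro k _
        rw [ih, if_neg, zero_mul]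
        intro hk; omega

lemma pathAdj_rowsum (N p : ℕ) (i : Fin N) :
    (∑ j, ((pathAdj N) ^ p) i j) = if (i : ℕ) + p < N then 1 else 0 := by
  by_cases h : (i : ℕ) + p < N
  · rw [if_pos h, Finset.sum_eq_single (⟨(i : ℕ) + p, h⟩ : Fin N)]
    · simp [pathAdj_pow]
    · intro k _ hk
      rw [pathAdj_pow, if_neg]
      intro hkeq; exact hk (Fin.ext hkeq)
    · simp
  · rw [if_neg h, Finset.sum_eq_zero]
    intro k _
    rw [pathAdj_pow, if_neg]
    intro hk; omega

lemma pathAdj_wsum (N p : ℕ) (i : Fin N) (X : Fin N → ℝ) (h : (i : ℕ) + p < N) :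
    (∑ j, ((pathAdj N) ^ p) i j * X j) = X ⟨(i : ℕ) + p, h⟩ := by
  rw [Finset.sum_eq_single (⟨(i : ℕ) + p, h⟩ : Fin N)]
  · simp [pathAdj_pow]
  · intro k _ hk
    rw [pathAdj_pow, if_neg, zero_mul]
    intro hkeq; exact hk (Fin.ext hkeq)
  · simp

lemma dispEntropy_equiv {ι κ : Type*} [Fintype ι] [Fintype κ] (e : ι ≃ κ)
    (m c : ℕ) (p : ι → Fin m → Fin c) (q : κ → Fin m → Fin c)
    (h : ∀ i, p i = q (e i)) : dispEntropy m c p = dispEntropy m c q := by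
  unfold dispEntropy
  congr 1
  apply Finset.sum_congr rfl
  intro π _
  have hcard : (Finset.univ.filter fun i => p i = π).card
      = (Finset.univ.filter fun j => q j = π).card := by
    apply Finset.card_equiv e
    intro i
    simp [h i]
  rw [hcard, Fintype.card_congr e]

/-- Equivalence of classical dispersion entropy `DE(m,L,c)` of a time series and the
graph dispersion entropy `DE_{P→}(m,L,c)` computed on the directed path:
the classical side uses the delay vectors `(x_i, x_{i+L}, …, x_{i+(m-1)L})`, the graph
side uses the row-normalized averages `y*_k = (D A^{kL} X)|_{V*}` on the admissible
vertex set `V*`, both classified entrywise by `F`. -/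
theorem DE_eq_DE_path (N m L c : ℕ) (hm : 2 ≤ m) (hL : 1 ≤ L) (hc : 1 ≤ c)
    (hN : (m - 1) * L < N) (X : Fin N → ℝ) (F : ℝ → Fin c) :
    dispEntropy m c
      (fun (i : Fin (N - (m - 1) * L)) (k : Fin m) =>
        F (X ⟨(i : ℕ) + (k : ℕ) * L, by
          have h2 : (k : ℕ) * L ≤ (m - 1) * L :=
            Nat.mul_le_mul (Nat.le_pred_of_lt k.2) le_rfl
          have h1 := i.2
          omega⟩)) =
    dispEntropy m c
      (fun (i : {v : Fin N // ∀ k < m, (∑ j, ((pathAdj N) ^ (k * L)) v j) ≠ 0})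
          (k : Fin m) =>
        F ((∑ j, ((pathAdj N) ^ ((k : ℕ) * L)) i.1 j * X j) /
            (∑ j, ((pathAdj N) ^ ((k : ℕ) * L)) i.1 j))) := by
  -- the admissible set
  have hmem : ∀ v : Fin N,
      (∀ k < m, (∑ j, ((pathAdj N) ^ (k * L)) v j) ≠ 0) ↔ (v : ℕ) < N - (m - 1) * L := by
    intro v
    constructor
    · intro h
      have := h (m - 1) (by omega)
      rw [pathAdj_rowsum] at this
      by_contra hc'
      rw [if_neg (by omega)] at this
      exact this rfl
    · intro h k hk
      rw [pathAdj_rowsum, if_pos]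
      · norm_num
      · have h2 : k * L ≤ (m - 1) * L := Nat.mul_le_mul (by omega) le_rfl
        omega
  let e : Fin (N - (m - 1) * L) ≃
      {v : Fin N // ∀ k < m, (∑ j, ((pathAdj N) ^ (k * L)) v j) ≠ 0} :=
    { toFun := fun i => ⟨⟨(i : ℕ), by have := i.2; omega⟩, by
        rw [hmem]; exact i.2⟩
      invFun := fun v => ⟨(v.1 : ℕ), (hmem v.1).1 v.2⟩
      left_inv := fun i => by ext; rfl
      right_inv := fun v => by ext; rfl }
  apply dispEntropy_equiv e
  intro i
  funext k
  have hlt : ((e i).1 : ℕ) + (k : ℕ) * L < N := by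
    have h2 : (k : ℕ) * L ≤ (m - 1) * L := Nat.mul_le_mul (Nat.le_pred_of_lt k.2) le_rfl
    have h1 := i.2
    show (i : ℕ) + (k : ℕ) * L < N
    omega
  have hden : (∑ j, ((pathAdj N) ^ ((k : ℕ) * L)) (e i).1 j) = 1 := by
    rw [pathAdj_rowsum, if_pos hlt]
  rw [hden, pathAdj_wsum N ((k : ℕ) * L) (e i).1 X hlt, div_one]
  rfl
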